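/- Let M be a closed subspace of H²(𝔻, ℂ^m) that is nearly S*-invariant with defect p and defect space F with orthonormal basis {E_1, …, E_p}, and let {W_1, …, W_r} be an orthonormal basis of W = M ⊖ (M ∩ zH²(𝔻, ℂ^m)). Then M is almost invariant for S* with defect p (i.e. S*M ⊆ M ⊕ F) if and only if S*W_i ∈ M ⊕ F for every i = 1, …, r. -/

import Mathlib

noncomputable section

open scoped ENNReal ComplexConjugate
open ContinuousLinearMap

abbrev Cm (m : ℕ) := EuclideanSpace ℂ (Fin m)
abbrev H2 (m : ℕ) := lp (fun _ : ℕ => Cm m) 2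

namespace Hardy

variable {m r : ℕ}

lemma two_toReal : (2 : ℝ≥0∞).toReal = 2 := by norm_num

def shiftFun (f : ℕ → Cm m) : ℕ → Cm m := fun n => match n with
  | 0 => 0
  | k + 1 => f k

lemma shift_memℓp (f : H2 m) : Memℓp (shiftFun (f : ∀ _, Cm m)) 2 := by
  rw [memℓp_gen_iff (by norm_num)]
  have hs : Summable fun n : ℕ => ‖(f : ∀ _, Cm m) n‖ ^ (2 : ℝ≥0∞).toReal :=
    (lp.memℓp f).summable (by norm_num)
  have : Summable fun n : ℕ =>
      ‖shiftFun (f : ∀ _, Cm m) (n + 1)‖ ^ (2 : ℝ≥0∞).toReal := hs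
  exact (summable_nat_add_iff 1).mp this

/-- The forward shift `S` on the vector-valued Hardy space (Taylor-coefficient model). -/
def S (m : ℕ) : H2 m →L[ℂ] H2 m :=
  LinearMap.mkContinuous
    { toFun := fun f => ⟨shiftFun (f : ∀ _, Cm m), shift_memℓp f⟩
      map_add' := by
        intro f g
        apply Subtype.ext
        have key : shiftFun (↑(f + g) : ∀ _, Cm m)
            = shiftFun (f : ∀ _, Cm m) + shiftFun (g : ∀ _, Cm m) := by
          funext n
          have h : (shiftFun (f : ∀ _, Cm m) + shiftFun (g : ∀ _, Cm m)) n
              = shiftFun (f : ∀ _, Cm m) n + shiftFun (g : ∀ _, Cm m) n := rfl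
          rw [h, lp.coeFn_add]
          cases n with
          | zero => simp [shiftFun]
          | succ k => simp [shiftFun]
        exact key
      map_smul' := by
        intro c f
        apply Subtype.ext
        have key : shiftFun (↑(c • f) : ∀ _, Cm m)
            = c • shiftFun (f : ∀ _, Cm m) := by
          funext n
          have h : (c • shiftFun (f : ∀ _, Cm m)) n
              = c • shiftFun (f : ∀ _, Cm m) n := rfl
          rw [h, lp.coeFn_smul]
          cases n with
          | zero => simp [shiftFun]
          | succ k => simp [shiftFun]
        exact key }
    1
    (by
      intro f
      simp only [one_mul]
      apply le_of_eq
      have h2 : (0:ℝ) < (2 : ℝ≥0∞).toReal := by norm_num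
      rw [lp.norm_eq_tsum_rpow h2, lp.norm_eq_tsum_rpow h2]
      congr 1
      have hsum : Summable fun n : ℕ =>
          ‖shiftFun (f : ∀ _, Cm m) n‖ ^ (2 : ℝ≥0∞).toReal := by
        rw [← memℓp_gen_iff (by norm_num)]; exact shift_memℓp f
      have key : ∑' n : ℕ, ‖shiftFun (f : ∀ _, Cm m) n‖ ^ (2 : ℝ≥0∞).toReal
          = ∑' n : ℕ, ‖(f : ∀ _, Cm m) n‖ ^ (2 : ℝ≥0∞).toReal := by
        rw [hsum.tsum_eq_zero_add]
        simp [shiftFun]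
      exact key)

/-- The backward shift `S*` (the adjoint of the forward shift). -/
def Sadj (m : ℕ) : H2 m →L[ℂ] H2 m := ContinuousLinearMap.adjoint (S m)

/-- `T` is a multiplier (multiplication by an operator-valued analytic function),
characterized by intertwining the shifts. -/
def IsMultiplier (T : H2 r →L[ℂ] H2 m) : Prop := S m ∘L T = T ∘L S r

/-- `T` is (the multiplication operator of) an inner multiplier: an isometric multiplier. -/
def IsInnerMultiplier (T : H2 r →L[ℂ] H2 m) : Prop :=
  (∀ f, ‖T f‖ = ‖f‖) ∧ IsMultiplier T

/-- The model space `K_Θ = H² ⊖ Θ H²`. -/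
def modelSpace (T : H2 r →L[ℂ] H2 m) : Submodule ℂ (H2 m) := (LinearMap.range (T : H2 r →ₗ[ℂ] H2 m))ᗮ

/-- The constant function with value `v` (Taylor coefficients `(v,0,0,…)`). -/
def const (v : Cm m) : H2 m := lp.single 2 0 v

/-- The constant function `eᵢ`. -/
def e (m : ℕ) (i : Fin m) : H2 m := const (EuclideanSpace.single i 1)

lemma coord_norm_le (x : Cm m) (i : Fin m) : ‖x i‖ ≤ ‖x‖ := by
  rw [EuclideanSpace.norm_eq]
  have h1 : ‖x i‖ = Real.sqrt (‖x i‖ ^ 2) := by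
    rw [Real.sqrt_sq (norm_nonneg _)]
  rw [h1]
  apply Real.sqrt_le_sqrt
  exact Finset.single_le_sum (f := fun j => ‖x j‖ ^ 2)
    (fun j _ => by positivity) (Finset.mem_univ i)

lemma coord_memℓp (i : Fin m) (f : H2 m) :
    Memℓp (fun n => EuclideanSpace.single (0 : Fin 1) ((f : ∀ _, Cm m) n i)) 2 := by
  rw [memℓp_gen_iff (by norm_num)]
  have hs : Summable fun n : ℕ => ‖(f : ∀ _, Cm m) n‖ ^ (2 : ℝ≥0∞).toReal :=
    (lp.memℓp f).summable (by norm_num)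
  apply Summable.of_nonneg_of_le (fun n => by positivity) _ hs
  intro n
  have : ‖EuclideanSpace.single (0 : Fin 1) ((f : ∀ _, Cm m) n i)‖
      = ‖(f : ∀ _, Cm m) n i‖ := by
    simp [EuclideanSpace.norm_single]
  rw [this]
  have h := coord_norm_le ((f : ∀ _, Cm m) n) i
  exact Real.rpow_le_rpow (norm_nonneg _) h (by norm_num)

/-- The `i`-th coordinate (column) of a `ℂᵐ`-valued Hardy space function, as a scalar
Hardy space function. -/
def coord (i : Fin m) (f : H2 m) : H2 1 :=
  ⟨fun n => EuclideanSpace.single (0 : Fin 1) ((f : ∀ _, Cm m) n i), coord_memℓp i f⟩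

/-- A multiplier on `H²(𝔻, ℂᵐ)` is diagonal, `Ψ = diag(ψ₁, …, ψ_m)`, with scalar
multipliers `ψᵢ` represented by the operators `t i`. -/
def IsDiagonal (T : H2 m →L[ℂ] H2 m) (t : Fin m → (H2 1 →L[ℂ] H2 1)) : Prop :=
  ∀ (f : H2 m) (i : Fin m), coord i (T f) = t i (coord i f)

/-- The analytic function on the disc associated to a scalar Hardy space element. -/
def toFun (f : H2 1) (z : ℂ) : ℂ := ∑' n : ℕ, ((f : ∀ _, Cm 1) n 0) * z ^ n

/-- `F` is a finite Blaschke product on the unit disc. -/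
def IsFiniteBlaschke (F : ℂ → ℂ) : Prop :=
  ∃ (k : ℕ) (c : ℂ) (a : Fin k → ℂ), ‖c‖ = 1 ∧ (∀ i, ‖a i‖ < 1) ∧
    ∀ z ∈ Metric.ball (0 : ℂ) 1,
      F z = c * ∏ i, (z - a i) / (1 - (starRingEnd ℂ) (a i) * z)

/-- `W = M ⊖ (M ∩ zH²)`. -/
def Wspace (M : Submodule ℂ (H2 m)) : Submodule ℂ (H2 m) :=
  M ⊓ (M ⊓ LinearMap.range (S m : H2 m →ₗ[ℂ] H2 m))ᗮ

end Hardy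

/-! Since `zH²` is closed (the shift is an isometry), `M = (M ∩ zH²) ⊕ W` for closed `M`. Near
invariance controls `S*` on `M ∩ zH²`, whose elements vanish at `0`, so almost invariance only has
to be checked on a spanning set of `W`. -/

namespace Hardy

variable {m : ℕ}

theorem norm_S_apply (f : H2 m) : ‖S m f‖ = ‖f‖ := by
  have h2 : (0 : ℝ) < (2 : ℝ≥0∞).toReal := by norm_num
  have hsum : Summable fun n => ‖shiftFun (f : ∀ _, Cm m) n‖ ^ (2 : ℝ≥0∞).toReal :=
    (shift_memℓp f).summable h2
  rw [lp.norm_eq_tsum_rpow h2, lp.norm_eq_tsum_rpow h2]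
  congr 1
  exact (hsum.tsum_eq_zero_add).trans (by simp [shiftFun])

theorem isClosed_range_S : IsClosed (LinearMap.range (S m : H2 m →ₗ[ℂ] H2 m) : Set (H2 m)) := by
  have hS : Isometry (S m) := AddMonoidHomClass.isometry_of_norm _ norm_S_apply
  rw [LinearMap.coe_range]
  exact hS.isClosedEmbedding.isClosed_range

theorem apply_zero_eq_zero_of_mem_range_S {f : H2 m}
    (hf : f ∈ LinearMap.range (S m : H2 m →ₗ[ℂ] H2 m)) : (f : ∀ _, Cm m) 0 = 0 := by
  obtain ⟨g, rfl⟩ := hf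
  rfl

theorem inf_range_S_sup_Wspace {M : Submodule ℂ (H2 m)} (hM : IsClosed (M : Set (H2 m))) :
    (M ⊓ LinearMap.range (S m : H2 m →ₗ[ℂ] H2 m)) ⊔ Wspace M = M := by
  have : CompleteSpace ↥(M ⊓ LinearMap.range (S m : H2 m →ₗ[ℂ] H2 m)) :=
    (hM.inter isClosed_range_S).completeSpace_coe
  have hdecomp := Submodule.sup_orthogonal_inf_of_hasOrthogonalProjection (K₂ := M)
    (inf_le_left : M ⊓ LinearMap.range (S m : H2 m →ₗ[ℂ] H2 m) ≤ M)
  rwa [inf_comm _ M] at hdecomp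

end Hardy

open Hardy in
theorem stmt_15_general (m r : ℕ) (M Fd : Submodule ℂ (H2 m))
    (hclosed : IsClosed (M : Set (H2 m)))
    (hnearly : ∀ F ∈ M, (F : ∀ _ : ℕ, Cm m) 0 = 0 → Sadj m F ∈ M ⊔ Fd)
    (W_ : Fin r → H2 m)
    (hWspan : Submodule.span ℂ (Set.range W_) = Wspace M) :
    (∀ F ∈ M, Sadj m F ∈ M ⊔ Fd) ↔ (∀ i, Sadj m (W_ i) ∈ M ⊔ Fd) := by
  have hWM : ∀ i, W_ i ∈ M := fun i =>
    (hWspan ▸ Submodule.subset_span ⟨i, rfl⟩ : W_ i ∈ Wspace M).1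
  refine ⟨fun h i => h (W_ i) (hWM i), fun h => ?_⟩
  suffices M ≤ (M ⊔ Fd).comap (Sadj m : H2 m →ₗ[ℂ] H2 m) from fun F hF => this hF
  refine (inf_range_S_sup_Wspace hclosed).ge.trans (sup_le ?_ ?_)
  · exact fun K hK => hnearly K hK.1 (apply_zero_eq_zero_of_mem_range_S hK.2)
  · rw [← hWspan, Submodule.span_le]
    rintro _ ⟨i, rfl⟩
    exact h i

open Hardy in
/-- A closed subspace `M` that is nearly `S*`-invariant with defect space `Fd` is almost
invariant for `S*` (i.e. `S*M ⊆ M ⊕ Fd`) iff `S*Wᵢ ∈ M ⊕ Fd` for each element `Wᵢ` of an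
orthonormal basis of `W = M ⊖ (M ∩ zH²)`. -/
theorem stmt_15 (m p r : ℕ) (M Fd : Submodule ℂ (H2 m))
    (hclosed : IsClosed (M : Set (H2 m)))
    (hFdim : Module.finrank ℂ Fd = p) (hFfin : FiniteDimensional ℂ Fd)
    (horth : ∀ x ∈ M, ∀ y ∈ Fd, (inner ℂ x y : ℂ) = 0)
    (hnearly : ∀ F ∈ M, (F : ∀ _ : ℕ, Cm m) 0 = 0 → Sadj m F ∈ M ⊔ Fd)
    (W_ : Fin r → H2 m) (hWmem : ∀ i, W_ i ∈ Wspace M) (hWON : Orthonormal ℂ W_)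
    (hWspan : Submodule.span ℂ (Set.range W_) = Wspace M) :
    (∀ F ∈ M, Sadj m F ∈ M ⊔ Fd) ↔ (∀ i, Sadj m (W_ i) ∈ M ⊔ Fd) :=
  stmt_15_general m r M Fd hclosed hnearly W_ hWspan
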